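/- arXiv:2306.16032 — 3 statements merged into one kernel-verified Lean document; each statement's English description precedes it below -/
import Mathlib

section
/- Let M be an MRTA instance whose cost function c is injective on E, and let (W, a) = (w_1,…,w_{|T|}, a) be the output of the SSI auction on M. Then the graph on vertex set R ∪ T with edge set {w_1,…,w_{|T|}} is a spanning forest of G with exactly |R| connected components, and each connected component is a tree whose vertex set contains exactly one robot. -/
open Finset

/-- The set of tasks assigned in the bid rounds with (0-based) index `< k`:
the second entries of the winning edges of those rounds. -/
def auctionAssigned {V : Type*} [DecidableEq V] {n : ℕ} (w : Fin n → V × V) (k : ℕ) :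
    Finset V :=
  (Finset.univ.filter fun i : Fin n => (i : ℕ) < k).image fun i => (w i).2

/-- `w` (a list of ordered pairs (bidder, task), one per bid round) is the output of the
SSI auction for the instance `(R, T, c)`: in each round `k`, the winning edge `w k` joins
a bidder `s ∈ R ∪ A_k` to an unassigned task `t ∈ T \ A_k`, and has strictly smaller cost
than every other such pair. -/
def IsAuction {V : Type*} [DecidableEq V] (R T : Finset V) (c : V → V → ℝ) {n : ℕ}
    (w : Fin n → V × V) : Prop :=
  ∀ k : Fin n,
    (w k).1 ∈ R ∪ auctionAssigned w (k : ℕ) ∧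
    (w k).2 ∈ T \ auctionAssigned w (k : ℕ) ∧
    ∀ s ∈ R ∪ auctionAssigned w (k : ℕ), ∀ t ∈ T \ auctionAssigned w (k : ℕ),
      (s, t) ≠ w k → c (w k).1 (w k).2 < c s t

/-- `c` is injective on the edge set of the complete graph: two unordered pairs of
distinct vertices with the same cost must be the same pair. -/
def InjOnEdges {V : Type*} (c : V → V → ℝ) : Prop :=
  ∀ x y x' y' : V, x ≠ y → x' ≠ y' → c x y = c x' y' →
    (x = x' ∧ y = y') ∨ (x = y' ∧ y = x')

/-- The graph on `R ∪ T` whose edges are the winning edges of the auction. -/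
def auctionGraph {V : Type*} {n : ℕ} (w : Fin n → V × V) : SimpleGraph V :=
  SimpleGraph.fromRel fun x y => ∃ k, w k = (x, y)

open Classical in
/-- The "ancestor chain" data of a vertex, computed with fuel `m`: the root of the
parent chain of `v`, together with the set of round indices whose edges appear on
the chain. -/
noncomputable def auctionChain {V : Type*} {n : ℕ} (w : Fin n → V × V) :
    ℕ → V → V × Finset (Fin n)
  | 0, v => (v, ∅)
  | m + 1, v =>
    if h : ∃ i : Fin n, (w i).2 = v then
      ((auctionChain w m (w h.choose).1).1,
        insert h.choose (auctionChain w m (w h.choose).1).2)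
    else (v, ∅)

section Aux

variable {V : Type*} {n : ℕ} {w : Fin n → V × V}

lemma auctionChain_of_not {v : V} (h : ¬∃ i : Fin n, (w i).2 = v) (m : ℕ) :
    auctionChain w m v = (v, ∅) := by
  cases m with
  | zero => rfl
  | succ m => simp only [auctionChain, dif_neg h]

lemma auctionChain_snd (hinj : Function.Injective fun i : Fin n => (w i).2)
    (j : Fin n) (m : ℕ) :
    auctionChain w (m + 1) ((w j).2) =
      ((auctionChain w m (w j).1).1, insert j (auctionChain w m (w j).1).2) := by
  have h : ∃ i : Fin n, (w i).2 = (w j).2 := ⟨j, rfl⟩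
  have hc : h.choose = j := hinj h.choose_spec
  simp only [auctionChain, dif_pos h, hc]

variable (hinj : Function.Injective fun i : Fin n => (w i).2)
  (hp : ∀ i : Fin n, (¬∃ i' : Fin n, (w i').2 = (w i).1) ∨
      ∃ i' : Fin n, (i' : ℕ) < (i : ℕ) ∧ (w i').2 = (w i).1)

include hinj hp

lemma auctionChain_stab :
    ∀ K : ℕ, ∀ j : Fin n, (j : ℕ) < K → ∀ m : ℕ, (j : ℕ) + 1 ≤ m →
      auctionChain w m ((w j).2) = auctionChain w ((j : ℕ) + 1) ((w j).2) := by
  intro K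
  induction K with
  | zero => omega
  | succ K IH =>
    intro j hj m hm
    obtain ⟨m', rfl⟩ : ∃ m', m = m' + 1 := ⟨m - 1, by omega⟩
    rw [auctionChain_snd hinj, auctionChain_snd hinj]
    have hkey : auctionChain w m' (w j).1 = auctionChain w (j : ℕ) (w j).1 := by
      rcases hp j with hrob | ⟨i, hi, hieq⟩
      · rw [auctionChain_of_not hrob, auctionChain_of_not hrob]
      · rw [← hieq, IH i (by omega) m' (by omega), IH i (by omega) (j : ℕ) (by omega)]
    rw [hkey]

/-- Root/edge-set step equations at fuel `n`. -/
lemma auctionChain_step (j : Fin n) :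
    auctionChain w n ((w j).2) =
      ((auctionChain w n (w j).1).1, insert j (auctionChain w n (w j).1).2) := by
  have hj1 : (j : ℕ) + 1 ≤ n := j.2
  rw [auctionChain_stab hinj hp n j j.2 n hj1, auctionChain_snd hinj]
  have hkey : auctionChain w (j : ℕ) (w j).1 = auctionChain w n (w j).1 := by
    rcases hp j with hrob | ⟨i, hi, hieq⟩
    · rw [auctionChain_of_not hrob, auctionChain_of_not hrob]
    · rw [← hieq, auctionChain_stab hinj hp n i (lt_of_le_of_lt (Nat.le_of_lt hi) j.2)
        (j : ℕ) (by omega),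
        auctionChain_stab hinj hp n i (lt_of_le_of_lt (Nat.le_of_lt hi) j.2) n
        (by have := i.2; omega)]
  rw [hkey]

/-- The root of a task's chain is not a task, and the indices on the chain are `≤ j`. -/
lemma auctionChain_main :
    ∀ K : ℕ, ∀ j : Fin n, (j : ℕ) < K →
      (¬∃ i : Fin n, (w i).2 = (auctionChain w n ((w j).2)).1) ∧
      (∀ i ∈ (auctionChain w n ((w j).2)).2, (i : ℕ) ≤ (j : ℕ)) := by
  intro K
  induction K with
  | zero => omega
  | succ K IH =>
    intro j hj
    rw [auctionChain_step hinj hp j]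
    rcases hp j with hrob | ⟨i, hi, hieq⟩
    · rw [auctionChain_of_not hrob]
      exact ⟨hrob, by simp⟩
    · rw [← hieq]
      obtain ⟨h1, h2⟩ := IH i (by omega)
      refine ⟨h1, ?_⟩
      intro i' hi'
      rcases Finset.mem_insert.mp hi' with h | h
      · omega
      · have := h2 i' h; omega

end Aux

theorem statement1 {V : Type*} [Fintype V] [DecidableEq V] (R T : Finset V)
    (hdisj : Disjoint R T) (hunion : R ∪ T = Finset.univ) (hcard : 3 ≤ Fintype.card V)
    (c : V → V → ℝ) (hsymm : ∀ x y, c x y = c y x) (hnonneg : ∀ x y, 0 ≤ c x y)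
    (hinj : InjOnEdges c)
    (w : Fin T.card → V × V) (hw : IsAuction R T c w) :
    -- the winning edges form a spanning forest, and each connected component is a tree
    -- containing exactly one robot (hence there are exactly `|R|` components)
    (auctionGraph w).IsAcyclic ∧
      ∀ comp : (auctionGraph w).ConnectedComponent,
        ∃! r : V, r ∈ R ∧ (auctionGraph w).connectedComponentMk r = comp := by
  classical
  set G := auctionGraph w with hG
  -- basic membership facts
  have hmemA : ∀ (v : V) (k : ℕ), v ∈ auctionAssigned w k ↔
      ∃ i : Fin T.card, (i : ℕ) < k ∧ (w i).2 = v := by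
    intro v k
    simp [auctionAssigned, and_comm]
  have htT : ∀ i : Fin T.card, (w i).2 ∈ T := fun i => (Finset.mem_sdiff.mp (hw i).2.1).1
  have htnR : ∀ i : Fin T.card, (w i).2 ∉ R := fun i h =>
    (Finset.disjoint_left.mp hdisj h) (htT i)
  -- injectivity of tasks
  have hinj2 : Function.Injective fun i : Fin T.card => (w i).2 := by
    intro i j h
    simp only at h
    by_contra hne
    rcases lt_or_gt_of_ne (fun h' : (i : ℕ) = (j : ℕ) => hne (Fin.ext h')) with hlt | hlt
    · exact (Finset.mem_sdiff.mp (hw j).2.1).2 ((hmemA _ _).mpr ⟨i, hlt, h⟩)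
    · exact (Finset.mem_sdiff.mp (hw i).2.1).2 ((hmemA _ _).mpr ⟨j, hlt, h.symm⟩)
  -- structure of bidders
  have hp : ∀ i : Fin T.card, (¬∃ i' : Fin T.card, (w i').2 = (w i).1) ∨
      ∃ i' : Fin T.card, (i' : ℕ) < (i : ℕ) ∧ (w i').2 = (w i).1 := by
    intro i
    rcases Finset.mem_union.mp (hw i).1 with h | h
    · left
      rintro ⟨i', hi'⟩
      exact (Finset.disjoint_left.mp hdisj h) (hi' ▸ htT i')
    · right
      exact (hmemA _ _).mp h
  -- every task is assigned in some round
  have htsurj : ∀ v ∈ T, ∃ i : Fin T.card, (w i).2 = v := by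
    intro v hv
    have himg : (Finset.univ.image fun i : Fin T.card => (w i).2) = T := by
      apply Finset.eq_of_subset_of_card_le
      · intro x hx
        obtain ⟨i, _, rfl⟩ := Finset.mem_image.mp hx
        exact htT i
      · rw [Finset.card_image_of_injective _ hinj2, Finset.card_univ, Fintype.card_fin]
    rw [← himg] at hv
    obtain ⟨i, _, hi⟩ := Finset.mem_image.mp hv
    exact ⟨i, hi⟩
  -- notation
  set Root : V → V := fun v => (auctionChain w T.card v).1 with hRoot
  set Ed : V → Finset (Fin T.card) := fun v => (auctionChain w T.card v).2 with hEd
  have hRootR : ∀ r ∈ R, Root r = r := by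
    intro r hr
    have : ¬∃ i : Fin T.card, (w i).2 = r := by
      rintro ⟨i, rfl⟩; exact htnR i hr
    simp [hRoot, auctionChain_of_not this]
  have hstep : ∀ j : Fin T.card, Root ((w j).2) = Root ((w j).1) ∧
      Ed ((w j).2) = insert j (Ed ((w j).1)) := by
    intro j
    have := auctionChain_step hinj2 hp j
    constructor
    · simp [hRoot, this]
    · simp [hEd, this]
  have hmain := fun j : Fin T.card => auctionChain_main hinj2 hp T.card j j.2
  -- Root v is always in R
  have hRootmem : ∀ v : V, Root v ∈ R := by
    intro v
    have hvu : v ∈ R ∪ T := hunion ▸ Finset.mem_univ v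
    have key : ¬∃ i : Fin T.card, (w i).2 = Root v := by
      rcases Finset.mem_union.mp hvu with h | h
      · rw [hRootR v h]; rintro ⟨i, rfl⟩; exact htnR i h
      · obtain ⟨j, rfl⟩ := htsurj v h
        exact (hmain j).1
    have hru : Root v ∈ R ∪ T := hunion ▸ Finset.mem_univ _
    rcases Finset.mem_union.mp hru with h | h
    · exact h
    · exact absurd (htsurj _ h) key
  -- distinct endpoints of winning edges
  have hne : ∀ j : Fin T.card, (w j).1 ≠ (w j).2 := by
    intro j h
    rcases Finset.mem_union.mp (hw j).1 with h1 | h1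
    · exact (Finset.disjoint_left.mp hdisj h1) (h ▸ htT j)
    · exact (Finset.mem_sdiff.mp (hw j).2.1).2 (h ▸ h1)
  -- adjacency characterization
  have hadj : ∀ x y : V, G.Adj x y ↔ x ≠ y ∧
      ((∃ k : Fin T.card, w k = (x, y)) ∨ ∃ k : Fin T.card, w k = (y, x)) := by
    intro x y
    simp [hG, auctionGraph, SimpleGraph.fromRel_adj]
  -- adjacency as winning edge
  have hadj' : ∀ x y : V, G.Adj x y →
      ∃ k : Fin T.card, (w k = (x, y) ∨ w k = (y, x)) := by
    intro x y hxy
    rcases ((hadj x y).mp hxy).2 with ⟨k, hk⟩ | ⟨k, hk⟩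
    · exact ⟨k, Or.inl hk⟩
    · exact ⟨k, Or.inr hk⟩
  -- adjacency preserves Root
  have hadjRoot : ∀ x y : V, G.Adj x y → Root x = Root y := by
    intro x y hxy
    obtain ⟨k, hk | hk⟩ := hadj' x y hxy
    · have := (hstep k).1
      rw [hk] at this; exact this.symm
    · have := (hstep k).1
      rw [hk] at this; exact this
  have hreachRoot : ∀ x y : V, G.Reachable x y → Root x = Root y := by
    intro x y hr
    obtain ⟨p⟩ := hr
    induction p with
    | nil => rfl
    | cons h _ ih => exact (hadjRoot _ _ h).trans ih
  -- each winning edge is an edge of G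
  have hedge : ∀ j : Fin T.card, G.Adj ((w j).1) ((w j).2) := by
    intro j
    exact (hadj _ _).mpr ⟨hne j, Or.inl ⟨j, by simp⟩⟩
  -- every vertex is reachable from its root
  have hreach : ∀ K : ℕ, ∀ j : Fin T.card, (j : ℕ) < K →
      G.Reachable ((w j).2) (Root ((w j).2)) := by
    intro K
    induction K with
    | zero => omega
    | succ K IH =>
      intro j hj
      have h1 : G.Reachable ((w j).2) ((w j).1) := (hedge j).symm.reachable
      have h2 : G.Reachable ((w j).1) (Root ((w j).1)) := by
        rcases hp j with hrob | ⟨i, hi, hieq⟩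
        · have : Root ((w j).1) = (w j).1 := by
            simp [hRoot, auctionChain_of_not hrob]
          rw [this]
        · rw [← hieq]; exact IH i (by omega)
      rw [(hstep j).1]
      exact h1.trans h2
  have hreachRoot' : ∀ v : V, G.Reachable v (Root v) := by
    intro v
    have hvu : v ∈ R ∪ T := hunion ▸ Finset.mem_univ v
    rcases Finset.mem_union.mp hvu with h | h
    · rw [hRootR v h]
    · obtain ⟨j, rfl⟩ := htsurj v h
      exact hreach T.card j j.2
  constructor
  · -- acyclicity
    rw [SimpleGraph.isAcyclic_iff_forall_adj_isBridge]
    intro x y hxy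
    obtain ⟨k, hk⟩ := hadj' x y hxy
    rw [SimpleGraph.isBridge_iff]
    refine ?_
    -- it suffices to show p k and t k are not reachable in G minus the edge
    have hsym : s(x, y) = s((w k).1, (w k).2) := by
      rcases hk with hk | hk <;> rw [hk] <;> simp [Sym2.eq_swap]
    rw [hsym]
    set G' := G \ SimpleGraph.fromEdgeSet {s((w k).1, (w k).2)} with hG'
    have hnoreach : ¬G'.Reachable ((w k).1) ((w k).2) := by
      -- invariant: membership of k in Ed is preserved by G'-adjacency
      have hinv : ∀ a b : V, G'.Adj a b → (k ∈ Ed a ↔ k ∈ Ed b) := by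
        intro a b hab
        rw [hG', SimpleGraph.sdiff_adj] at hab
        obtain ⟨hab1, hab2⟩ := hab
        obtain ⟨m, hm⟩ := hadj' a b hab1
        have hmk : m ≠ k := by
          rintro rfl
          apply hab2
          rw [SimpleGraph.fromEdgeSet_adj]
          refine ⟨?_, hab1.ne⟩
          rcases hm with hm | hm <;> rw [hm] <;> simp [Sym2.eq_swap]
        have hK : k ∈ Ed ((w m).2) ↔ k ∈ Ed ((w m).1) := by
          rw [(hstep m).2, Finset.mem_insert]
          simp [Ne.symm hmk]
        rcases hm with hm | hm
        · rw [hm] at hK; exact hK.symm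
        · rw [hm] at hK; exact hK
      have hinv' : ∀ a b : V, G'.Reachable a b → (k ∈ Ed a ↔ k ∈ Ed b) := by
        intro a b hr
        obtain ⟨p⟩ := hr
        induction p with
        | nil => exact Iff.rfl
        | cons h _ ih => exact (hinv _ _ h).trans ih
      intro hr
      have h1 : k ∈ Ed ((w k).2) := by
        rw [(hstep k).2]; exact Finset.mem_insert_self _ _
      have h2 : k ∉ Ed ((w k).1) := by
        rcases hp k with hrob | ⟨i, hi, hieq⟩
        · simp [hEd, auctionChain_of_not hrob]
        · rw [← hieq]
          intro hmem
          have := (hmain i).2 k hmem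
          omega
      exact h2 ((hinv' _ _ hr).symm.mp h1)
    -- transfer back to x, y
    rcases hk with hk | hk
    · intro hr
      apply hnoreach
      simp only [hk]
      exact hr
    · intro hr
      apply hnoreach
      simp only [hk]
      exact hr.symm
  · -- components
    intro comp
    obtain ⟨v, rfl⟩ := comp.exists_rep
    refine ⟨Root v, ⟨hRootmem v, ?_⟩, ?_⟩
    · exact SimpleGraph.ConnectedComponent.sound (hreachRoot' v).symm
    · rintro r' ⟨hr'R, hr'c⟩
      have hrv : G.Reachable r' v := SimpleGraph.ConnectedComponent.exact hr'c
      have := hreachRoot _ _ hrv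
      rw [hRootR r' hr'R] at this
      exact this
end

section
/- Let M be an MRTA instance whose cost function c is injective on E, let (W, a) be the output of the SSI auction on M, and let G' be the complete graph on R ∪ T with edge costs c'(x,y) = 0 if both x,y ∈ R and c'(x,y) = c(x,y) otherwise. Then for every spanning tree F' of the complete graph on R, the edge set F' ∪ {w_1,…,w_{|T|}} is a spanning tree of G' of minimum total c'-cost; in particular, Σ_{k=1}^{|T|} c(w_k) equals the minimum weight of a spanning tree of G'. -/
/-!
Under `c'` the robots may be joined among themselves for free, so the SSI auction is Prim's
algorithm started from the whole robot set at once. Each winning edge `w_k` attaches its task,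
not yet touched by the auction, as a new leaf, so `F' ∪ W` stays a forest and ends up spanning.
Round `k` is a cut `(R ∪ A_{k-1}, T \ A_{k-1})` in which `w_k` is the strictly cheapest crossing
edge, so by the cut property every minimum spanning tree of `G'` contains `W`. Since `c' ≥ 0` and
`F'` costs nothing, `F' ∪ W` weighs `∑ c(w_k)`, which is at most the weight of such a tree.
-/

open Finset
open scoped Classical

/-- The total cost of the edges of a graph `H` with respect to a symmetric cost
function `c` (each unordered edge counted once). -/
noncomputable def gWeight {V : Type*} [Fintype V] (c : V → V → ℝ) (H : SimpleGraph V) : ℝ :=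
  (∑ x : V, ∑ y : V, if H.Adj x y then c x y else 0) / 2

namespace SimpleGraph

variable {V : Type*}

theorem not_reachable_of_forall_not_adj {G : SimpleGraph V} {u v : V} (hv : ∀ z, ¬G.Adj v z)
    (hne : u ≠ v) : ¬G.Reachable u v :=
  fun ⟨p⟩ => hv _ (p.reverse.adj_snd (Walk.not_nil_of_ne hne.symm))

theorem edgeFinset_sup_edge_deleteEdges [Fintype V] {K : SimpleGraph V} {u v : V} (e : Sym2 V)
    (huv : ¬K.Adj u v) (hne : u ≠ v) :
    ((K ⊔ edge u v).deleteEdges {e}).edgeFinset = (insert s(u, v) K.edgeFinset).erase e := by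
  ext e'
  by_cases h : e' = s(u, v) <;> simp [h, hne, huv, and_comm]

theorem IsTree.isTree_sup_edge_deleteEdges [Finite V] {K : SimpleGraph V} (hK : K.IsTree)
    {u v x y : V} (huv : ¬K.Adj u v) (hne : u ≠ v) {p : K.Walk u v} (hp : p.IsPath)
    (hxy : s(x, y) ∈ p.edges) : ((K ⊔ edge u v).deleteEdges {s(x, y)}).IsTree := by
  have := Fintype.ofFinite V
  have hvu : (K ⊔ edge u v).Adj v u := by simp [edge_adj, hne.symm]
  have hcycle : (Walk.cons hvu (p.mapLe le_sup_left)).IsCycle := by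
    rw [Walk.cons_isCycle_iff, Walk.isPath_mapLe, Walk.edges_mapLe_eq_edges]
    exact ⟨hp, fun h => huv (p.adj_of_mem_edges h).symm⟩
  have hnotBridge : ¬(K ⊔ edge u v).IsBridge s(x, y) := fun hbr =>
    hbr.notMem_edges_of_isCycle hcycle (by simp [hxy])
  rw [isTree_iff_connected_and_card]
  refine ⟨(hK.connected.mono le_sup_left).connected_delete_edge_of_not_isBridge hnotBridge, ?_⟩
  rw [Nat.card_eq_fintype_card, Nat.card_eq_fintype_card, ← edgeFinset_card,
    edgeFinset_sup_edge_deleteEdges _ huv hne,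
    Finset.card_erase_of_mem (Finset.mem_insert_of_mem (by simpa using p.edges_subset_edgeSet hxy)),
    Finset.card_insert_of_notMem (by simpa using huv), Nat.add_sub_cancel, hK.card_edgeFinset]

section Weight

variable [Fintype V] {c c' : V → V → ℝ}

theorem gWeight_eq_sum_edgeFinset (hc : ∀ x y, c x y = c y x)
    (H : SimpleGraph V) [Fintype H.edgeSet] :
    gWeight c H = ∑ e ∈ H.edgeFinset, Sym2.lift ⟨c, hc⟩ e := by
  have hdart : (∑ x : V, ∑ y : V, if H.Adj x y then c x y else 0) =
      ∑ d : H.Dart, Sym2.lift ⟨c, hc⟩ d.edge := by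
    rw [← Fintype.sum_prod_type', ← Finset.sum_filter]
    refine Finset.sum_bij' (fun p hp => ⟨p, (Finset.mem_filter.mp hp).2⟩) (fun d _ => d.toProd)
      ?_ ?_ ?_ ?_ ?_ <;> simp
  have hfiber : ∑ d : H.Dart, Sym2.lift ⟨c, hc⟩ d.edge =
      ∑ e ∈ H.edgeFinset, 2 * Sym2.lift ⟨c, hc⟩ e := by
    rw [← Finset.sum_fiberwise_of_maps_to (g := Dart.edge) (t := H.edgeFinset)
      (fun d _ => by simp)]
    refine Finset.sum_congr rfl fun e he => ?_
    rw [Finset.sum_congr rfl fun d hd => by rw [(Finset.mem_filter.mp hd).2], Finset.sum_const,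
      H.dart_edge_fiber_card e (mem_edgeFinset.mp he), nsmul_eq_mul, Nat.cast_ofNat]
  rw [gWeight, hdart, hfiber, ← Finset.mul_sum]
  ring

theorem gWeight_mono (hc : ∀ x y, 0 ≤ c x y) {G H : SimpleGraph V} (h : G ≤ H) :
    gWeight c G ≤ gWeight c H := by
  unfold gWeight
  gcongr with x _ y _
  split_ifs with hG hH hH
  exacts [le_rfl, absurd (h hG) hH, hc x y, le_rfl]

theorem gWeight_congr {H : SimpleGraph V} (h : ∀ x y, H.Adj x y → c x y = c' x y) :
    gWeight c H = gWeight c' H := by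
  unfold gWeight
  congr 1
  refine Finset.sum_congr rfl fun x _ => Finset.sum_congr rfl fun y _ => ?_
  split_ifs with hxy
  exacts [h x y hxy, rfl]

theorem gWeight_sup_of_forall_adj_eq_zero {G : SimpleGraph V} (H : SimpleGraph V)
    (hG : ∀ x y, G.Adj x y → c x y = 0) : gWeight c (G ⊔ H) = gWeight c H := by
  unfold gWeight
  congr 1
  refine Finset.sum_congr rfl fun x _ => Finset.sum_congr rfl fun y _ => ?_
  by_cases hH : H.Adj x y
  · simp [hH]
  · by_cases hGxy : G.Adj x y <;> simp [hH, hGxy, hG x y]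

theorem gWeight_sup_edge_deleteEdges (hc : ∀ x y, c x y = c y x) {K : SimpleGraph V}
    {u v x y : V} (huv : ¬K.Adj u v) (hne : u ≠ v) (hxy : K.Adj x y) :
    gWeight c ((K ⊔ edge u v).deleteEdges {s(x, y)}) = gWeight c K + c u v - c x y := by
  rw [gWeight_eq_sum_edgeFinset hc, gWeight_eq_sum_edgeFinset hc,
    edgeFinset_sup_edge_deleteEdges _ huv hne,
    Finset.sum_erase_eq_sub (Finset.mem_insert_of_mem (by simpa using hxy)),
    Finset.sum_insert (by simpa using huv)]
  simp [add_comm]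

def IsMinSpanningTree (c : V → V → ℝ) (K : SimpleGraph V) : Prop :=
  K.IsTree ∧ ∀ K' : SimpleGraph V, K'.IsTree → gWeight c K ≤ gWeight c K'

theorem exists_isMinSpanningTree [DecidableEq V] (c : V → V → ℝ) {K : SimpleGraph V}
    (hK : K.IsTree) : ∃ K₀, IsMinSpanningTree c K₀ := by
  obtain ⟨K₀, hK₀, hmin⟩ := Finset.exists_min_image
    (Finset.univ.filter fun K : SimpleGraph V => K.IsTree) (gWeight c) ⟨K, by simpa using hK⟩
  exact ⟨K₀, (Finset.mem_filter.mp hK₀).2, fun K' hK' => hmin K' (by simpa using hK')⟩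

/-- The cut property. Otherwise, trading the edge where the tree path from `u` to `v` leaves `S`
for `uv` would give a lighter spanning tree. -/
theorem IsMinSpanningTree.adj_of_forall_lt (hc : ∀ x y, c x y = c y x) {K : SimpleGraph V}
    (hK : IsMinSpanningTree c K) {S : Set V} {u v : V} (hu : u ∈ S) (hv : v ∉ S)
    (hlt : ∀ x ∈ S, ∀ y ∉ S, (x, y) ≠ (u, v) → c u v < c x y) : K.Adj u v := by
  by_contra huv
  have hne : u ≠ v := fun h => hv (h ▸ hu)
  obtain ⟨p, hp⟩ := hK.1.connected.exists_isPath u v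
  obtain ⟨d, hd, hdS, hdS'⟩ := p.exists_boundary_dart S hu hv
  have hde : s(d.fst, d.snd) ∈ p.edges := List.mem_map_of_mem (f := Dart.edge) hd
  have hd_ne : (d.fst, d.snd) ≠ (u, v) := by
    intro h
    obtain ⟨rfl, rfl⟩ := Prod.mk.inj h
    exact huv d.adj
  have hexchange := gWeight_sup_edge_deleteEdges hc huv hne d.adj
  have hmin := hK.2 _ (hK.1.isTree_sup_edge_deleteEdges huv hne hp hde)
  linarith [hlt _ hdS _ hdS' hd_ne]

end Weight

end SimpleGraph

def costZeroOn {V : Type*} [DecidableEq V] (R : Finset V) (c : V → V → ℝ) (x y : V) : ℝ :=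
  if x ∈ R ∧ y ∈ R then 0 else c x y

theorem costZeroOn_comm {V : Type*} [DecidableEq V] {R : Finset V} {c : V → V → ℝ}
    (hc : ∀ x y, c x y = c y x) (x y : V) : costZeroOn R c x y = costZeroOn R c y x := by
  simp only [costZeroOn, and_comm, hc x y]

theorem costZeroOn_nonneg {V : Type*} [DecidableEq V] {R : Finset V} {c : V → V → ℝ}
    (hc : ∀ x y, 0 ≤ c x y) (x y : V) : 0 ≤ costZeroOn R c x y := by
  unfold costZeroOn
  split_ifs
  exacts [le_rfl, hc x y]

section AuctionGraph

open SimpleGraph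

def auctionPrefixGraph {V : Type*} {n : ℕ} (w : Fin n → V × V) (k : ℕ) : SimpleGraph V :=
  fromRel fun x y => ∃ i : Fin n, (i : ℕ) < k ∧ w i = (x, y)

variable {V : Type*} {n : ℕ} {w : Fin n → V × V}

theorem auctionPrefixGraph_zero : auctionPrefixGraph w 0 = ⊥ := by
  ext; simp [auctionPrefixGraph]

theorem auctionPrefixGraph_succ {k : ℕ} (hk : k < n) :
    auctionPrefixGraph w (k + 1) =
      auctionPrefixGraph w k ⊔ edge (w ⟨k, hk⟩).1 (w ⟨k, hk⟩).2 := by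
  ext a b
  simp only [auctionPrefixGraph, sup_adj, fromRel_adj, edge_adj, Nat.lt_succ_iff_lt_or_eq,
    or_and_right, exists_or]
  grind

theorem auctionPrefixGraph_eq_auctionGraph : auctionPrefixGraph w n = auctionGraph w := by
  ext; simp [auctionPrefixGraph, auctionGraph]

end AuctionGraph

theorem mem_auctionAssigned {V : Type*} [DecidableEq V] {n : ℕ} {w : Fin n → V × V} {v : V}
    {k : ℕ} : v ∈ auctionAssigned w k ↔ ∃ i : Fin n, (i : ℕ) < k ∧ (w i).2 = v := by
  simp [auctionAssigned]

namespace IsAuction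

open SimpleGraph

variable {V : Type*} [DecidableEq V] {R T : Finset V} {c : V → V → ℝ} {n : ℕ}
  {w : Fin n → V × V}

theorem snd_mem (hw : IsAuction R T c w) (k : Fin n) : (w k).2 ∈ T :=
  (Finset.mem_sdiff.mp (hw k).2.1).1

theorem snd_notMem_auctionAssigned (hw : IsAuction R T c w) (k : Fin n) :
    (w k).2 ∉ auctionAssigned w k :=
  (Finset.mem_sdiff.mp (hw k).2.1).2

theorem snd_notMem_robots (hw : IsAuction R T c w) (hdisj : Disjoint R T) (k : Fin n) :
    (w k).2 ∉ R :=
  Finset.disjoint_right.mp hdisj (hw.snd_mem k)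

theorem injective_snd (hw : IsAuction R T c w) : Function.Injective fun k => (w k).2 := by
  intro i j h
  by_contra hij
  rcases lt_or_gt_of_ne hij with hij | hij
  · exact hw.snd_notMem_auctionAssigned j (mem_auctionAssigned.mpr ⟨i, hij, h⟩)
  · exact hw.snd_notMem_auctionAssigned i (mem_auctionAssigned.mpr ⟨j, hij, h.symm⟩)

theorem exists_snd_eq (hw : IsAuction R T c w) (hn : n = T.card) {t : V} (ht : t ∈ T) :
    ∃ k, (w k).2 = t := by
  have himage : Finset.univ.image (fun k => (w k).2) = T :=
    Finset.eq_of_subset_of_card_le (by simpa [Finset.subset_iff] using hw.snd_mem)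
      (by rw [Finset.card_image_of_injective _ hw.injective_snd]; simp [hn])
  rw [← himage] at ht
  simpa using ht

theorem fst_mem_or_exists_snd_eq (hw : IsAuction R T c w) (k : Fin n) :
    (w k).1 ∈ R ∨ ∃ i < k, (w i).2 = (w k).1 := by
  rcases Finset.mem_union.mp (hw k).1 with h | h
  · exact Or.inl h
  · obtain ⟨i, hi, h⟩ := mem_auctionAssigned.mp h
    exact Or.inr ⟨i, hi, h⟩

theorem lt_of_fst_eq_snd (hw : IsAuction R T c w) (hdisj : Disjoint R T) {j k : Fin n}
    (h : (w j).1 = (w k).2) : k < j := by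
  rcases hw.fst_mem_or_exists_snd_eq j with hR | ⟨i, hij, hi⟩
  · exact absurd (h ▸ hR) (hw.snd_notMem_robots hdisj k)
  · exact hw.injective_snd (hi.trans h) ▸ hij

theorem fst_ne_snd (hw : IsAuction R T c w) (hdisj : Disjoint R T) (k : Fin n) :
    (w k).1 ≠ (w k).2 :=
  fun h => (hw.lt_of_fst_eq_snd hdisj h).false

theorem auctionGraph_adj (hw : IsAuction R T c w) (hdisj : Disjoint R T) (k : Fin n) :
    (auctionGraph w).Adj (w k).1 (w k).2 :=
  (fromRel_adj _ _ _).mpr ⟨hw.fst_ne_snd hdisj k, Or.inl ⟨k, rfl⟩⟩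

theorem exists_robot_reachable (hw : IsAuction R T c w) (hdisj : Disjoint R T) (k : Fin n) :
    ∃ r ∈ R, (auctionGraph w).Reachable (w k).2 r := by
  induction k using WellFoundedLT.induction with
  | _ k ih =>
    have hk := (hw.auctionGraph_adj hdisj k).symm.reachable
    rcases hw.fst_mem_or_exists_snd_eq k with hR | ⟨i, hik, hi⟩
    · exact ⟨_, hR, hk⟩
    · obtain ⟨r, hr, hir⟩ := ih i hik
      exact ⟨r, hr, hk.trans (hi ▸ hir)⟩

theorem connected_sup_auctionGraph [Fintype V] [Nonempty V] (hw : IsAuction R T c w)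
    (hdisj : Disjoint R T) (hunion : R ∪ T = Finset.univ) (hn : n = T.card)
    {F : SimpleGraph V} (hF : ∀ x ∈ R, ∀ y ∈ R, F.Reachable x y) :
    (F ⊔ auctionGraph w).Connected := by
  have hrobot : ∀ v, ∃ r ∈ R, (F ⊔ auctionGraph w).Reachable v r := by
    intro v
    rcases Finset.mem_union.mp (hunion ▸ Finset.mem_univ v) with hv | hv
    · exact ⟨v, hv, .refl v⟩
    · obtain ⟨k, rfl⟩ := hw.exists_snd_eq hn hv
      obtain ⟨r, hr, hkr⟩ := hw.exists_robot_reachable hdisj k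
      exact ⟨r, hr, hkr.mono le_sup_right⟩
  refine (connected_iff _).mpr ⟨fun a b => ?_, inferInstance⟩
  obtain ⟨ra, hra, ha⟩ := hrobot a
  obtain ⟨rb, hrb, hb⟩ := hrobot b
  exact (ha.trans ((hF ra hra rb hrb).mono le_sup_left)).trans hb.symm

theorem not_adj_snd_sup_auctionPrefixGraph (hw : IsAuction R T c w) (hdisj : Disjoint R T)
    {F : SimpleGraph V} (hFR : ∀ x y, F.Adj x y → x ∈ R ∧ y ∈ R) (k : Fin n) (z : V) :
    ¬(F ⊔ auctionPrefixGraph w k).Adj (w k).2 z := by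
  rintro (hF | ⟨-, ⟨i, hik, hi⟩ | ⟨i, hik, hi⟩⟩)
  · exact hw.snd_notMem_robots hdisj k (hFR _ _ hF).1
  · exact (hw.lt_of_fst_eq_snd hdisj (congrArg Prod.fst hi)).not_gt hik
  · exact hik.ne (congrArg Fin.val (hw.injective_snd (by simp [hi])))

theorem isAcyclic_sup_auctionGraph (hw : IsAuction R T c w) (hdisj : Disjoint R T)
    {F : SimpleGraph V} (hFR : ∀ x y, F.Adj x y → x ∈ R ∧ y ∈ R) (hF : F.IsAcyclic) :
    (F ⊔ auctionGraph w).IsAcyclic := by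
  suffices h : ∀ k ≤ n, (F ⊔ auctionPrefixGraph w k).IsAcyclic by
    simpa [auctionPrefixGraph_eq_auctionGraph] using h n le_rfl
  intro k
  induction k with
  | zero => simpa [auctionPrefixGraph_zero] using hF
  | succ k ih =>
    intro hk
    rw [auctionPrefixGraph_succ hk, ← sup_assoc]
    exact (ih (by omega)).sup_edge_of_not_reachable (not_reachable_of_forall_not_adj
      (hw.not_adj_snd_sup_auctionPrefixGraph hdisj hFR ⟨k, hk⟩) (hw.fst_ne_snd hdisj _))

theorem gWeight_auctionGraph [Fintype V] (hw : IsAuction R T c w) (hdisj : Disjoint R T)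
    (hc : ∀ x y, c x y = c y x) : gWeight c (auctionGraph w) = ∑ k, c (w k).1 (w k).2 := by
  have hedges : (auctionGraph w).edgeFinset = Finset.univ.image fun k => s((w k).1, (w k).2) := by
    ext e
    induction e using Sym2.ind with
    | _ a b =>
    rw [mem_edgeFinset, mem_edgeSet, auctionGraph, fromRel_adj]
    simp only [Finset.mem_image, Finset.mem_univ, true_and, Sym2.eq_iff, Prod.ext_iff,
      ← exists_or, and_iff_right_iff_imp]
    rintro ⟨k, hk | hk⟩ rfl <;> exact hw.fst_ne_snd hdisj k (by simp [hk])
  have hinj : Function.Injective fun k => s((w k).1, (w k).2) := by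
    intro i j h
    rcases Sym2.eq_iff.mp h with ⟨-, h⟩ | ⟨h1, h2⟩
    · exact hw.injective_snd h
    · exact absurd (hw.lt_of_fst_eq_snd hdisj h1) (hw.lt_of_fst_eq_snd hdisj h2.symm).asymm
  rw [gWeight_eq_sum_edgeFinset hc, hedges, Finset.sum_image fun i _ j _ h => hinj h]
  rfl

theorem gWeight_costZeroOn_auctionGraph [Fintype V] (hw : IsAuction R T c w)
    (hdisj : Disjoint R T) (hc : ∀ x y, c x y = c y x) :
    gWeight (costZeroOn R c) (auctionGraph w) = ∑ k, c (w k).1 (w k).2 := by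
  rw [← hw.gWeight_auctionGraph hdisj hc]
  refine gWeight_congr fun x y hxy => if_neg ?_
  obtain ⟨-, ⟨k, hk⟩ | ⟨k, hk⟩⟩ := hxy
  · exact fun h => hw.snd_notMem_robots hdisj k (by simpa [hk] using h.2)
  · exact fun h => hw.snd_notMem_robots hdisj k (by simpa [hk] using h.1)

theorem auctionGraph_le_of_isMinSpanningTree [Fintype V] (hw : IsAuction R T c w)
    (hdisj : Disjoint R T) (hunion : R ∪ T = Finset.univ) (hc : ∀ x y, c x y = c y x)
    {K : SimpleGraph V} (hK : IsMinSpanningTree (costZeroOn R c) K) : auctionGraph w ≤ K := by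
  have hwin : ∀ k, K.Adj (w k).1 (w k).2 := by
    intro k
    have hcost : ∀ x y, y ∉ R → costZeroOn R c x y = c x y := fun x y hy => if_neg (hy ·.2)
    refine hK.adj_of_forall_lt (costZeroOn_comm hc) (S := ↑(R ∪ auctionAssigned w k))
      (hw k).1 ?_ fun x hx y hy hne => ?_
    · simpa using ⟨hw.snd_notMem_robots hdisj k, hw.snd_notMem_auctionAssigned k⟩
    · simp only [Finset.coe_union, Set.mem_union, Finset.mem_coe, not_or] at hx hy
      have hyT : y ∈ T := (Finset.mem_union.mp (hunion ▸ Finset.mem_univ y)).resolve_left hy.1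
      rw [hcost _ _ (hw.snd_notMem_robots hdisj k), hcost _ _ hy.1]
      exact (hw k).2.2 x (Finset.mem_union.mpr hx) y (Finset.mem_sdiff.mpr ⟨hyT, hy.2⟩) hne
  rintro a b ⟨-, ⟨k, hk⟩ | ⟨k, hk⟩⟩
  · simpa [hk] using hwin k
  · simpa [hk] using (hwin k).symm

end IsAuction

theorem statement2_general {V : Type*} [Fintype V] [DecidableEq V] (R T : Finset V)
    (hdisj : Disjoint R T) (hunion : R ∪ T = Finset.univ) (hcard : 3 ≤ Fintype.card V)
    (c : V → V → ℝ) (hsymm : ∀ x y, c x y = c y x) (hnonneg : ∀ x y, 0 ≤ c x y)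
    (w : Fin T.card → V × V) (hw : IsAuction R T c w)
    -- `F'` is a spanning tree of the complete graph on `R`
    (F' : SimpleGraph V)
    (hF'R : ∀ x y : V, F'.Adj x y → x ∈ R ∧ y ∈ R)
    (hF'acyc : F'.IsAcyclic)
    (hF'conn : ∀ x ∈ R, ∀ y ∈ R, F'.Reachable x y) :
    -- `F' ∪ W` is a spanning tree of `G'` (the complete graph, where `G'`-costs of
    -- robot-robot edges are `0` and all other costs agree with `c`) ...
    (F' ⊔ auctionGraph w).IsTree ∧
    -- ... of minimum total `c'`-cost among all spanning trees of `G'` ...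
    (∀ K : SimpleGraph V, K.IsTree →
      gWeight (fun x y => if x ∈ R ∧ y ∈ R then 0 else c x y) (F' ⊔ auctionGraph w) ≤
        gWeight (fun x y => if x ∈ R ∧ y ∈ R then 0 else c x y) K) ∧
    -- ... and the total cost of the winning edges is this minimum spanning tree weight
    (∑ k : Fin T.card, c (w k).1 (w k).2 =
      gWeight (fun x y => if x ∈ R ∧ y ∈ R then 0 else c x y) (F' ⊔ auctionGraph w)) := by
  have : Nonempty V := Fintype.card_pos_iff.mp (by omega)
  have htree : (F' ⊔ auctionGraph w).IsTree :=
    ⟨hw.connected_sup_auctionGraph hdisj hunion rfl hF'conn,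
      hw.isAcyclic_sup_auctionGraph hdisj hF'R hF'acyc⟩
  have hF'free : gWeight (costZeroOn R c) (F' ⊔ auctionGraph w) =
      gWeight (costZeroOn R c) (auctionGraph w) :=
    SimpleGraph.gWeight_sup_of_forall_adj_eq_zero _ fun x y h => if_pos (hF'R x y h)
  obtain ⟨K₀, hK₀⟩ := SimpleGraph.exists_isMinSpanningTree (costZeroOn R c) htree
  have hle : gWeight (costZeroOn R c) (F' ⊔ auctionGraph w) ≤ gWeight (costZeroOn R c) K₀ :=
    hF'free ▸ SimpleGraph.gWeight_mono (costZeroOn_nonneg hnonneg)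
      (hw.auctionGraph_le_of_isMinSpanningTree hdisj hunion hsymm hK₀)
  exact ⟨htree, fun K hK => hle.trans (hK₀.2 K hK),
    (hF'free.trans (hw.gWeight_costZeroOn_auctionGraph hdisj hsymm)).symm⟩

theorem statement2 {V : Type*} [Fintype V] [DecidableEq V] (R T : Finset V)
    (hdisj : Disjoint R T) (hunion : R ∪ T = Finset.univ) (hcard : 3 ≤ Fintype.card V)
    (c : V → V → ℝ) (hsymm : ∀ x y, c x y = c y x) (hnonneg : ∀ x y, 0 ≤ c x y)
    (hinj : InjOnEdges c)
    (w : Fin T.card → V × V) (hw : IsAuction R T c w)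
    -- `F'` is a spanning tree of the complete graph on `R`
    (F' : SimpleGraph V)
    (hF'R : ∀ x y : V, F'.Adj x y → x ∈ R ∧ y ∈ R)
    (hF'acyc : F'.IsAcyclic)
    (hF'conn : ∀ x ∈ R, ∀ y ∈ R, F'.Reachable x y) :
    -- `F' ∪ W` is a spanning tree of `G'` (the complete graph, where `G'`-costs of
    -- robot-robot edges are `0` and all other costs agree with `c`) ...
    (F' ⊔ auctionGraph w).IsTree ∧
    -- ... of minimum total `c'`-cost among all spanning trees of `G'` ...
    (∀ K : SimpleGraph V, K.IsTree →
      gWeight (fun x y => if x ∈ R ∧ y ∈ R then 0 else c x y) (F' ⊔ auctionGraph w) ≤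
        gWeight (fun x y => if x ∈ R ∧ y ∈ R then 0 else c x y) K) ∧
    -- ... and the total cost of the winning edges is this minimum spanning tree weight
    (∑ k : Fin T.card, c (w k).1 (w k).2 =
      gWeight (fun x y => if x ∈ R ∧ y ∈ R then 0 else c x y) (F' ⊔ auctionGraph w)) :=
  statement2_general R T hdisj hunion hcard c hsymm hnonneg w hw F' hF'R hF'acyc hF'conn
end

section
/- Let M be an MRTA instance whose cost function c is injective on E, and let (W, a) be the output of the SSI auction on M. Then Σ_{k=1}^{|T|} c(w_k) ≤ C(𝒫) for every plan 𝒫 of M; in particular, Σ_{k=1}^{|T|} c(w_k) ≤ C(MinSum(M)). -/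
open Finset

/-- The (traversal) cost of a route given as a list of vertices: the sum of the
costs of consecutive pairs. -/
def pathCost {α : Type*} (c : α → α → ℝ) (l : List α) : ℝ :=
  ((l.zip l.tail).map fun p => c p.1 p.2).sum

/-- `P` is a plan: for each robot `r ∈ R`, `P r` is a robot-route starting at `r`
whose remaining vertices are tasks, the routes have no repeated vertices, and the
vertex sets of the routes partition `R ∪ T`. -/
def IsPlan {V : Type*} (R T : Finset V) (P : V → List V) : Prop :=
  (∀ r ∈ R, ∃ rest : List V, P r = r :: rest ∧ ∀ v ∈ rest, v ∈ T) ∧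
  (∀ r ∈ R, (P r).Nodup) ∧
  (∀ v : V, ∃! r : V, r ∈ R ∧ v ∈ P r)

/-!
A plan is encoded by the parent map `p` sending each task to its predecessor on its route: the
iterates of `p` lead every vertex to a robot, and the plan costs `∑ t ∈ T, c (p t) t`. The SSI
auction is Prim's algorithm on the graph in which the robots are merged into one root, so the
usual exchange argument applies. In round `k`, let `B` be the robots and the tasks assigned so
far and `(s, t)` the winning edge; follow `p` from `t` to its first vertex in `B` and reverse
that path so that it hangs from `t`. This deletes exactly one edge crossing the cut `(B, Bᶜ)`,
which costs at least `c s t`, and every vertex is still led into `B ∪ {t}`.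
-/

section Lists

variable {α : Type*} {p : α → α}

lemma pathCost_eq_sum_tail (c : α → α → ℝ) :
    ∀ {l : List α}, (∀ i (h : i + 1 < l.length), p l[i + 1] = l[i]) →
      pathCost c l = (l.tail.map fun v => c (p v) v).sum
  | [], _ => rfl
  | [_], _ => rfl
  | a :: b :: l, hl => by
    have hb : p b = a := hl 0 (by simp)
    have ih := pathCost_eq_sum_tail c (l := b :: l) fun i h => hl (i + 1) (by simpa using h)
    simp_all [pathCost]

lemma iterate_getElem_eq_head {l : List α} (hl : ∀ i (h : i + 1 < l.length), p l[i + 1] = l[i]) :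
    ∀ i (h : i < l.length), p^[i] l[i] = l[0]
  | 0, _ => rfl
  | i + 1, h => by
    rw [Function.iterate_succ_apply, hl i h]
    exact iterate_getElem_eq_head hl i (by omega)

end Lists

def IsRootedIn {V : Type*} (p : V → V) (B : Finset V) : Prop :=
  ∀ v, ∃ n, p^[n] v ∈ B

lemma injOn_iterate_of_first_mem {V : Type*} {p : V → V} {t : V} {N : ℕ} {B : Finset V}
    (hout : ∀ i ≤ N, p^[i] t ∉ B) (hin : p^[N + 1] t ∈ B) :
    Set.InjOn (fun i => p^[i] t) (Set.Iic (N + 1)) := by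
  suffices ∀ i j, i < j → j ≤ N + 1 → p^[i] t ≠ p^[j] t by
    intro i hi j hj hij
    by_contra hne
    rcases Nat.lt_or_gt_of_ne hne with h | h
    exacts [this i j h hj hij, this j i h hi hij.symm]
  intro i j hij hj heq
  apply hout (N + 1 - j + i) (by omega)
  rw [Function.iterate_add_apply, heq, ← Function.iterate_add_apply, Nat.sub_add_cancel hj]
  exact hin

section ReverseOrbit

variable {V : Type*} [DecidableEq V] (p : V → V) (t : V) (N : ℕ)

-- The value at `t` is left as `p t`; it does not matter, since `t` joins the roots.
def reverseOrbit (v : V) : V :=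
  if h : ∃ i < N, p^[i + 1] t = v then p^[Nat.find h] t else p v

variable {p t N} {B : Finset V}

lemma reverseOrbit_iterate_succ (hinj : Set.InjOn (fun i => p^[i] t) (Set.Iic (N + 1)))
    {i : ℕ} (hi : i < N) : reverseOrbit p t N (p^[i + 1] t) = p^[i] t := by
  have h : ∃ j < N, p^[j + 1] t = p^[i + 1] t := ⟨i, hi, rfl⟩
  have hfind := Nat.find_spec h
  have : Nat.find h + 1 = i + 1 :=
    hinj (Set.mem_Iic.2 (by omega)) (Set.mem_Iic.2 (by omega)) hfind.2
  rw [reverseOrbit, dif_pos h, show Nat.find h = i by omega]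

lemma iterate_reverseOrbit (hinj : Set.InjOn (fun i => p^[i] t) (Set.Iic (N + 1))) :
    ∀ i ≤ N, (reverseOrbit p t N)^[i] (p^[i] t) = t
  | 0, _ => rfl
  | i + 1, hi => by
    rw [Function.iterate_succ_apply, reverseOrbit_iterate_succ hinj (by omega)]
    exact iterate_reverseOrbit hinj i (by omega)

lemma isRootedIn_reverseOrbit (hp : IsRootedIn p B)
    (hinj : Set.InjOn (fun i => p^[i] t) (Set.Iic (N + 1))) :
    IsRootedIn (reverseOrbit p t N) (insert t B) := by
  intro v
  obtain ⟨n, hn⟩ := hp v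
  induction n generalizing v with
  | zero => exact ⟨0, mem_insert_of_mem hn⟩
  | succ n ih =>
    by_cases hv : ∃ i < N, p^[i + 1] t = v
    · obtain ⟨i, hi, rfl⟩ := hv
      exact ⟨i + 1, by rw [iterate_reverseOrbit hinj (i + 1) hi]; exact mem_insert_self _ _⟩
    · obtain ⟨m, hm⟩ := ih (p v) (by rwa [← Function.iterate_succ_apply])
      refine ⟨m + 1, ?_⟩
      rwa [Function.iterate_succ_apply, reverseOrbit, dif_neg hv]

end ReverseOrbit

section Exchange

variable {V : Type*} [Fintype V] [DecidableEq V] {c : V → V → ℝ} {p : V → V} {t : V}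
  {N : ℕ} {B : Finset V}

lemma sum_compl_reverseOrbit (hc : ∀ x y, c x y = c y x)
    (hout : ∀ i ≤ N, p^[i] t ∉ B) (hinj : Set.InjOn (fun i => p^[i] t) (Set.Iic (N + 1))) :
    ∑ v ∈ (insert t B)ᶜ, c (reverseOrbit p t N v) v + c (p^[N + 1] t) (p^[N] t) =
      ∑ v ∈ Bᶜ, c (p v) v := by
  have ht : t ∉ B := hout 0 (Nat.zero_le N)
  set x : ℕ → V := fun i => p^[i] t
  have hx (i j : ℕ) (hi : i ≤ N + 1) (hj : j ≤ N + 1) (h : x i = x j) : i = j := hinj hi hj h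
  set C := (range N).image fun i => x (i + 1)
  have hC : C ⊆ (insert t B)ᶜ := by
    simp only [C, subset_iff, mem_image, mem_range, mem_compl, mem_insert, not_or]
    rintro _ ⟨i, hi, rfl⟩
    exact ⟨fun h => absurd (hx _ 0 (by omega) (by omega) h) (by omega), hout (i + 1) (by omega)⟩
  have hsum (f : V → V) :
      ∑ v ∈ C, c (f v) v = ∑ i ∈ range N, c (f (x (i + 1))) (x (i + 1)) :=
    sum_image fun i hi j hj h => by
      rw [coe_range, Set.mem_Iio] at hi hj
      simpa using hx _ _ (by omega) (by omega) h
  have hoff : ∀ v ∈ (insert t B)ᶜ \ C, reverseOrbit p t N v = p v := by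
    intro v hv
    refine dif_neg fun ⟨i, hi, hiv⟩ => (mem_sdiff.1 hv).2 ?_
    exact mem_image.2 ⟨i, mem_range.2 hi, hiv⟩
  have hcompl : Bᶜ = insert t (insert t B)ᶜ := by
    ext v; by_cases v = t <;> simp_all
  have hp : ∀ i, p (x i) = x (i + 1) := fun i => (Function.iterate_succ_apply' p i t).symm
  have hnew : ∑ v ∈ (insert t B)ᶜ, c (reverseOrbit p t N v) v =
      ∑ v ∈ (insert t B)ᶜ \ C, c (p v) v + ∑ i ∈ range N, c (x i) (x (i + 1)) := by
    rw [← sum_sdiff hC, hsum]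
    congr 1
    · exact sum_congr rfl fun v hv => by rw [hoff v hv]
    · exact sum_congr rfl fun i hi => by rw [reverseOrbit_iterate_succ hinj (mem_range.1 hi)]
  have hold : ∑ v ∈ Bᶜ, c (p v) v =
      c (x 1) (x 0) + (∑ v ∈ (insert t B)ᶜ \ C, c (p v) v +
        ∑ i ∈ range N, c (x (i + 2)) (x (i + 1))) := by
    rw [hcompl, sum_insert (by simp), ← sum_sdiff hC, hsum]
    simp only [hp]
    rfl
  have hrev : ∑ i ∈ range (N + 1), c (x (i + 1)) (x i) =
      ∑ i ∈ range N, c (x i) (x (i + 1)) + c (x (N + 1)) (x N) := by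
    rw [sum_range_succ]; simp only [hc (x (_ + 1))]
  have hfwd : ∑ i ∈ range (N + 1), c (x (i + 1)) (x i) =
      c (x 1) (x 0) + ∑ i ∈ range N, c (x (i + 2)) (x (i + 1)) := by
    rw [sum_range_succ', add_comm]
  change _ + c (x (N + 1)) (x N) = _
  linarith

lemma IsRootedIn.exists_exchange (hc : ∀ x y, c x y = c y x) (hp : IsRootedIn p B)
    {s : V} (ht : t ∉ B) (hmin : ∀ u ∈ B, ∀ v ∉ B, c s t ≤ c u v) :
    ∃ q : V → V, IsRootedIn q (insert t B) ∧
      c s t + ∑ v ∈ (insert t B)ᶜ, c (q v) v ≤ ∑ v ∈ Bᶜ, c (p v) v := by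
  obtain ⟨N, hN⟩ : ∃ N, Nat.find (hp t) = N + 1 :=
    Nat.exists_eq_succ_of_ne_zero fun h => ht (by simpa [h] using Nat.find_spec (hp t))
  have hin : p^[N + 1] t ∈ B := hN ▸ Nat.find_spec (hp t)
  have hout : ∀ i ≤ N, p^[i] t ∉ B := fun i hi => Nat.find_min (hp t) (by omega)
  have hinj := injOn_iterate_of_first_mem hout hin
  refine ⟨reverseOrbit p t N, isRootedIn_reverseOrbit hp hinj, ?_⟩
  rw [← sum_compl_reverseOrbit hc hout hinj]
  linarith [hmin _ hin _ (hout N le_rfl)]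

end Exchange

lemma IsPlan.exists_parent {V : Type*} [DecidableEq V] {R T : Finset V} {P : V → List V}
    (hP : IsPlan R T P) (hdisj : Disjoint R T) (c : V → V → ℝ) :
    ∃ p : V → V, IsRootedIn p R ∧ ∑ r ∈ R, pathCost c (P r) = ∑ t ∈ T, c (p t) t := by
  obtain ⟨hstart, hnodup, hunique⟩ := hP
  choose owner howner using fun v => (hunique v).exists
  have howner_eq : ∀ v, ∀ r ∈ R, v ∈ P r → owner v = r := fun v r hr hv =>
    (hunique v).unique (howner v) ⟨hr, hv⟩
  let p : V → V := fun v => (P (owner v)).getD ((P (owner v)).idxOf v - 1) v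
  have hpred : ∀ r ∈ R, ∀ i (h : i + 1 < (P r).length), p (P r)[i + 1] = (P r)[i] := by
    intro r hr i h
    simp only [p, howner_eq _ r hr (List.getElem_mem h), (hnodup r hr).idxOf_getElem,
      Nat.add_sub_cancel]
    exact List.getD_eq_getElem _ _ (by omega)
  refine ⟨p, fun v => ?_, ?_⟩
  · obtain ⟨hr, hv⟩ := howner v
    generalize owner v = r at hr hv
    obtain ⟨i, hi, rfl⟩ := List.mem_iff_getElem.1 hv
    obtain ⟨rest, hrest, -⟩ := hstart r hr
    refine ⟨i, ?_⟩
    rw [iterate_getElem_eq_head (hpred r hr)]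
    simpa [hrest] using hr
  · rw [← sum_fiberwise_of_maps_to (s := T) fun t _ => (howner t).1]
    refine sum_congr rfl fun r hr => ?_
    obtain ⟨rest, hrest, hrestT⟩ := hstart r hr
    have hfiber : T.filter (owner · = r) = rest.toFinset := by
      ext v
      simp only [mem_filter, List.mem_toFinset]
      constructor
      · rintro ⟨hvT, rfl⟩
        have hv := (howner v).2
        rw [hrest] at hv
        exact (List.mem_cons.1 hv).resolve_left fun h => disjoint_left.1 hdisj (h ▸ hr) hvT
      · intro hv
        exact ⟨hrestT v hv, howner_eq v r hr (hrest ▸ List.mem_cons_of_mem _ hv)⟩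
    have hrest_nodup : rest.Nodup := (List.nodup_cons.1 (hrest ▸ hnodup r hr)).2
    rw [pathCost_eq_sum_tail c (hpred r hr), hfiber, hrest, List.tail_cons,
      List.sum_toFinset _ hrest_nodup]

section Auction

variable {V : Type*} [DecidableEq V] {R T : Finset V} {c : V → V → ℝ} {n : ℕ}
  {w : Fin n → V × V}

lemma Fin.filter_val_lt_succ {k : ℕ} (hk : k < n) :
    univ.filter (fun j : Fin n => (j : ℕ) < k + 1) =
      insert ⟨k, hk⟩ (univ.filter fun j : Fin n => (j : ℕ) < k) := by
  ext j
  simp only [mem_filter, mem_univ, true_and, mem_insert, Fin.ext_iff]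
  omega

lemma auctionAssigned_zero : auctionAssigned w 0 = ∅ := by
  simp [auctionAssigned]

lemma auctionAssigned_succ {k : ℕ} (hk : k < n) :
    auctionAssigned w (k + 1) = insert (w ⟨k, hk⟩).2 (auctionAssigned w k) := by
  rw [auctionAssigned, Fin.filter_val_lt_succ hk, image_insert]
  rfl

lemma snd_mem_auctionAssigned {i : Fin n} {k : ℕ} (hik : (i : ℕ) < k) :
    (w i).2 ∈ auctionAssigned w k :=
  mem_image_of_mem _ (mem_filter.2 ⟨mem_univ i, hik⟩)

lemma IsAuction.injective_snd_s3 (hw : IsAuction R T c w) : Function.Injective fun j => (w j).2 := by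
  have hne : ∀ i j : Fin n, i < j → (w i).2 ≠ (w j).2 := fun i j hij heq =>
    (mem_sdiff.1 (hw j).2.1).2 (heq ▸ snd_mem_auctionAssigned hij)
  intro i j h
  by_contra hij
  rcases lt_or_gt_of_ne hij with hij | hij
  exacts [hne i j hij h, hne j i hij h.symm]

lemma IsAuction.auctionAssigned_card {w : Fin T.card → V × V} (hw : IsAuction R T c w) :
    auctionAssigned w T.card = T := by
  have himage : auctionAssigned w T.card = univ.image fun j => (w j).2 := by
    rw [auctionAssigned, filter_true_of_mem fun j _ => j.isLt]
  refine eq_of_subset_of_card_le ?_ ?_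
  · rw [himage]
    exact image_subset_iff.2 fun j _ => (mem_sdiff.1 (hw j).2.1).1
  · rw [himage, card_image_of_injective _ hw.injective_snd_s3, card_univ, Fintype.card_fin]

variable [Fintype V]

lemma IsAuction.exists_isRootedIn_le (hdisj : Disjoint R T) (hunion : R ∪ T = univ)
    (hc : ∀ x y, c x y = c y x) (hw : IsAuction R T c w) {p : V → V} (hp : IsRootedIn p R) :
    ∀ k ≤ n, ∃ q : V → V, IsRootedIn q (R ∪ auctionAssigned w k) ∧
      ∑ j ∈ univ.filter fun j : Fin n => (j : ℕ) < k, c (w j).1 (w j).2 +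
        ∑ v ∈ (R ∪ auctionAssigned w k)ᶜ, c (q v) v ≤ ∑ v ∈ Rᶜ, c (p v) v
  | 0, _ => ⟨p, by simpa [auctionAssigned_zero] using hp, by simp [auctionAssigned_zero]⟩
  | k + 1, hk => by
    obtain ⟨q, hq, hle⟩ := hw.exists_isRootedIn_le hdisj hunion hc hp k (by omega)
    set K : Fin n := ⟨k, hk⟩
    obtain ⟨-, ht, hmin⟩ := hw K
    have hcut : ∀ u ∈ R ∪ auctionAssigned w k, ∀ v ∉ R ∪ auctionAssigned w k,
        c (w K).1 (w K).2 ≤ c u v := by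
      intro u hu v hv
      have hvT : v ∈ T \ auctionAssigned w k := by
        have hv' : v ∈ R ∪ T := hunion ▸ mem_univ v
        simp only [mem_union, not_or, mem_sdiff] at hv hv' ⊢
        exact ⟨hv'.resolve_left hv.1, hv.2⟩
      by_cases he : (u, v) = w K
      · rw [← he]
      · exact (hmin u hu v hvT he).le
    have ht' : (w K).2 ∉ R ∪ auctionAssigned w k := by
      rw [mem_sdiff] at ht
      simp only [mem_union, not_or]
      exact ⟨fun h => disjoint_left.1 hdisj h ht.1, ht.2⟩
    obtain ⟨q', hq', hle'⟩ := hq.exists_exchange hc ht' hcut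
    refine ⟨q', ?_, ?_⟩
    · rwa [auctionAssigned_succ hk, union_insert]
    · rw [auctionAssigned_succ hk, union_insert, Fin.filter_val_lt_succ hk,
        sum_insert (by simp)]
      linarith

lemma IsAuction.sum_le_of_isRootedIn (hdisj : Disjoint R T) (hunion : R ∪ T = univ)
    (hc : ∀ x y, c x y = c y x) {w : Fin T.card → V × V} (hw : IsAuction R T c w)
    {p : V → V} (hp : IsRootedIn p R) :
    ∑ k, c (w k).1 (w k).2 ≤ ∑ t ∈ T, c (p t) t := by
  obtain ⟨q, -, hle⟩ := hw.exists_isRootedIn_le hdisj hunion hc hp T.card le_rfl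
  have hRT : Rᶜ = T := IsCompl.compl_eq ⟨hdisj, codisjoint_iff.2 hunion⟩
  rwa [hw.auctionAssigned_card, hunion, compl_univ, sum_empty, add_zero,
    filter_true_of_mem fun j _ => j.isLt, hRT] at hle

end Auction

theorem statement3_general {V : Type*} [Fintype V] [DecidableEq V] (R T : Finset V)
    (hdisj : Disjoint R T) (hunion : R ∪ T = Finset.univ)
    (c : V → V → ℝ) (hsymm : ∀ x y, c x y = c y x)
    (w : Fin T.card → V × V) (hw : IsAuction R T c w) :
    -- the total cost of the winning edges is at most the cost of every plan;
    -- in particular it is at most `C(MinSum(M))`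
    ∀ P : V → List V, IsPlan R T P →
      ∑ k : Fin T.card, c (w k).1 (w k).2 ≤ ∑ r ∈ R, pathCost c (P r) := by
  intro P hP
  obtain ⟨p, hp, hcost⟩ := hP.exists_parent hdisj c
  rw [hcost]
  exact hw.sum_le_of_isRootedIn hdisj hunion hsymm hp

theorem statement3 {V : Type*} [Fintype V] [DecidableEq V] (R T : Finset V)
    (hdisj : Disjoint R T) (hunion : R ∪ T = Finset.univ) (hcard : 3 ≤ Fintype.card V)
    (c : V → V → ℝ) (hsymm : ∀ x y, c x y = c y x) (hnonneg : ∀ x y, 0 ≤ c x y)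
    (hinj : InjOnEdges c)
    (w : Fin T.card → V × V) (hw : IsAuction R T c w) :
    -- the total cost of the winning edges is at most the cost of every plan;
    -- in particular it is at most `C(MinSum(M))`
    ∀ P : V → List V, IsPlan R T P →
      ∑ k : Fin T.card, c (w k).1 (w k).2 ≤ ∑ r ∈ R, pathCost c (P r) :=
  statement3_general R T hdisj hunion c hsymm w hw
end
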